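/- arXiv:0909.3907 — 2 statements merged into one kernel-verified Lean document; each statement's English description precedes it below -/
import Mathlib

section
/- For a rank-one operator X = |w⟩⟨v| on H_n ⊗ H_m with |v⟩, |w⟩ unit vectors, the k-th operator norm satisfies ‖X‖_{S(k)} = ‖|w⟩‖_{s(k)} · ‖|v⟩‖_{s(k)}. -/
noncomputable section
open scoped BigOperators

/-- Inner product (conjugate-linear in the first argument). -/
def ip {ι : Type*} [Fintype ι] (w v : ι → ℂ) : ℂ := ∑ p, star (w p) * v p

/-- Euclidean norm. -/
def nrm {ι : Type*} [Fintype ι] (v : ι → ℂ) : ℝ := Real.sqrt (ip v v).re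

/-- Elementary tensor (product vector). -/
def prodVec {n m : ℕ} (a : Fin n → ℂ) (b : Fin m → ℂ) : Fin n × Fin m → ℂ :=
  fun p => a p.1 * b p.2

/-- Schmidt rank at most `k`: `v` is a sum of `k` product vectors. -/
def SRle {n m : ℕ} (k : ℕ) (v : Fin n × Fin m → ℂ) : Prop :=
  ∃ (a : Fin k → Fin n → ℂ) (b : Fin k → Fin m → ℂ), v = ∑ i, prodVec (a i) (b i)

/-- The `k`-th vector norm. -/
def vecNorm {n m : ℕ} (k : ℕ) (v : Fin n × Fin m → ℂ) : ℝ :=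
  sSup {r | ∃ w, nrm w = 1 ∧ SRle k w ∧ r = ‖ip w v‖}

/-- The `k`-th operator norm. -/
def opNorm {n m : ℕ} (k : ℕ) (X : Matrix (Fin n × Fin m) (Fin n × Fin m) ℂ) : ℝ :=
  sSup {r | ∃ v w, nrm v = 1 ∧ nrm w = 1 ∧ SRle k v ∧ SRle k w ∧
    r = ‖ip w (X.mulVec v)‖}

/-- Rank-one operator `|w⟩⟨v|`. -/
def outer {ι : Type*} (w v : ι → ℂ) : Matrix ι ι ℂ := Matrix.of fun p q => w p * star (v q)

/-- `k`-block positivity. -/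
def BlockPos {n m : ℕ} (k : ℕ) (Y : Matrix (Fin n × Fin m) (Fin n × Fin m) ℂ) : Prop :=
  ∀ v : Fin n × Fin m → ℂ, nrm v = 1 → SRle k v → 0 ≤ (ip v (Y.mulVec v)).re

/-- Schmidt number at most `k`. -/
def SNle {n m : ℕ} (k : ℕ) (ρ : Matrix (Fin n × Fin m) (Fin n × Fin m) ℂ) : Prop :=
  ∃ (N : ℕ) (p : Fin N → ℝ) (v : Fin N → Fin n × Fin m → ℂ),
    (∀ i, 0 ≤ p i) ∧ (∑ i, p i) = 1 ∧ (∀ i, nrm (v i) = 1) ∧ (∀ i, SRle k (v i)) ∧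
    ρ = ∑ i, (p i : ℂ) • outer (v i) (v i)

/-!
The matrix element `⟨w'|(|w⟩⟨v|)|v'⟩` factors as `⟨w'|w⟩ ⟨v|v'⟩`, so the set of values whose
supremum defines `‖|w⟩⟨v|‖_{S(k)}` is the pointwise product of the sets defining `‖|w⟩‖_{s(k)}`
and `‖|v⟩‖_{s(k)}`. For bounded sets of nonnegative reals, the supremum of a pointwise product is
the product of the suprema.
-/

open scoped Pointwise

namespace Real

theorem sSup_mul_of_nonneg {s t : Set ℝ} (hs₀ : ∀ x ∈ s, 0 ≤ x) (ht₀ : ∀ y ∈ t, 0 ≤ y)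
    (hs : BddAbove s) (ht : BddAbove t) : sSup (s * t) = sSup s * sSup t := by
  have hst : ∀ z ∈ s * t, z ≤ sSup s * sSup t := by
    rintro _ ⟨x, hx, y, hy, rfl⟩
    exact mul_le_mul (le_csSup hs hx) (le_csSup ht hy) (ht₀ y hy) (sSup_nonneg hs₀)
  have hst₀ : 0 ≤ sSup (s * t) :=
    sSup_nonneg fun _ ⟨x, hx, y, hy, hxy⟩ => hxy ▸ mul_nonneg (hs₀ x hx) (ht₀ y hy)
  refine le_antisymm (Real.sSup_le hst (mul_nonneg (sSup_nonneg hs₀) (sSup_nonneg ht₀))) ?_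
  have hx_mul : ∀ x ∈ s, x * sSup t ≤ sSup (s * t) := fun x hx => by
    rw [← smul_eq_mul, ← sSup_smul_of_nonneg (hs₀ x hx)]
    refine Real.sSup_le ?_ hst₀
    rintro _ ⟨y, hy, rfl⟩
    exact le_csSup ⟨_, hst⟩ (Set.mul_mem_mul hx hy)
  rw [mul_comm, ← smul_eq_mul, ← sSup_smul_of_nonneg (sSup_nonneg ht₀)]
  refine Real.sSup_le ?_ hst₀
  rintro _ ⟨x, hx, rfl⟩
  exact (mul_comm _ x).trans_le (hx_mul x hx)

end Real

section Euclidean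

variable {ι : Type*} [Fintype ι]

theorem ip_eq_inner (w v : ι → ℂ) : ip w v = inner ℂ (WithLp.toLp 2 w) (WithLp.toLp 2 v) := by
  simp [ip, EuclideanSpace.inner_toLp_toLp, dotProduct, mul_comm]

theorem nrm_eq_norm (v : ι → ℂ) : nrm v = ‖WithLp.toLp 2 v‖ := by
  rw [@norm_eq_sqrt_re_inner ℂ, nrm, ip_eq_inner]
  rfl

theorem norm_ip_le (w v : ι → ℂ) : ‖ip w v‖ ≤ nrm w * nrm v := by
  rw [ip_eq_inner, nrm_eq_norm, nrm_eq_norm]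
  exact norm_inner_le_norm _ _

theorem norm_ip_comm (w v : ι → ℂ) : ‖ip w v‖ = ‖ip v w‖ := by
  rw [ip_eq_inner, ip_eq_inner, norm_inner_symm]

theorem ip_outer_mulVec (w v w' v' : ι → ℂ) :
    ip w' ((outer w v).mulVec v') = ip w' w * ip v v' := by
  simp only [ip, outer, Matrix.mulVec, Matrix.of_apply, dotProduct, Finset.mul_sum,
    Finset.sum_mul]
  rw [Finset.sum_comm]
  exact Finset.sum_congr rfl fun p _ => Finset.sum_congr rfl fun q _ => by ring

end Euclidean

section SchmidtRank

variable {n m : ℕ} (k : ℕ)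

def overlapSet (v : Fin n × Fin m → ℂ) : Set ℝ :=
  {r | ∃ w, nrm w = 1 ∧ SRle k w ∧ r = ‖ip w v‖}

theorem vecNorm_eq_sSup_overlapSet (v : Fin n × Fin m → ℂ) :
    vecNorm k v = sSup (overlapSet k v) := rfl

theorem nonneg_of_mem_overlapSet {v : Fin n × Fin m → ℂ} :
    ∀ r ∈ overlapSet k v, 0 ≤ r := by
  rintro _ ⟨w, -, -, rfl⟩
  exact norm_nonneg _

theorem bddAbove_overlapSet (v : Fin n × Fin m → ℂ) : BddAbove (overlapSet k v) := by
  refine ⟨nrm v, ?_⟩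
  rintro _ ⟨w, hw, -, rfl⟩
  simpa [hw] using norm_ip_le w v

theorem opNorm_outer_eq_sSup_mul (w v : Fin n × Fin m → ℂ) :
    opNorm k (outer w v) = sSup (overlapSet k w * overlapSet k v) := by
  rw [opNorm]
  congr 1
  ext r
  constructor
  · rintro ⟨v', w', hv', hw', hv'k, hw'k, rfl⟩
    exact ⟨_, ⟨w', hw', hw'k, rfl⟩, _, ⟨v', hv', hv'k, rfl⟩,
      by rw [ip_outer_mulVec, norm_mul, norm_ip_comm v v']⟩
  · rintro ⟨_, ⟨w', hw', hw'k, rfl⟩, _, ⟨v', hv', hv'k, rfl⟩, rfl⟩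
    exact ⟨v', w', hv', hw', hv'k, hw'k, by rw [ip_outer_mulVec, norm_mul, norm_ip_comm v v']⟩

end SchmidtRank

theorem stmt3_general {n m k : ℕ} (v w : Fin n × Fin m → ℂ) :
    opNorm k (outer w v) = vecNorm k w * vecNorm k v := by
  rw [opNorm_outer_eq_sSup_mul, Real.sSup_mul_of_nonneg (nonneg_of_mem_overlapSet k)
    (nonneg_of_mem_overlapSet k) (bddAbove_overlapSet k w) (bddAbove_overlapSet k v),
    vecNorm_eq_sSup_overlapSet, vecNorm_eq_sSup_overlapSet]

/-- for a rank-one operator `|w⟩⟨v|`, the k-th operator norm is the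
product of the k-th vector norms. -/
theorem stmt3 {n m k : ℕ} (hmn : m ≤ n) (hk1 : 1 ≤ k) (hkm : k ≤ m)
    (v w : Fin n × Fin m → ℂ) (hv : nrm v = 1) (hw : nrm w = 1) :
    opNorm k (outer w v) = vecNorm k w * vecNorm k v :=
  stmt3_general v w
end
end

section
/- Let X = X* ∈ L(H_n ⊗ H_m) be Hermitian with negative part X⁻ and projections P_X⁰, P_X⁻ onto its kernel and negative eigenspace respectively. If ‖P_X⁰ + P_X⁻‖_{S(k)} < 1 and every positive eigenvalue λ_i⁺ of X satisfies λ_i⁺ ≥ ‖X⁻‖_{S(k)} / (1 − ‖P_X⁰ + P_X⁻‖_{S(k)}), then X is k-block positive. -/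
noncomputable section
open scoped BigOperators

/-!
Expand a unit vector `u` of Schmidt rank at most `k` in the orthonormal eigenbasis of `X` and put
`q i = |⟨v_i|u⟩|²`, so that `∑ q i = 1` and `⟨u|X|u⟩ = ∑ μ_i q_i`. Testing the `k`-th operator
norms with `v = w = u` gives `∑_{μ_i ≤ 0} q_i ≤ p := ‖P_X⁰ + P_X⁻‖_{S(k)}` and
`∑_{μ_i < 0} |μ_i| q_i ≤ a := ‖X⁻‖_{S(k)}`. Hence the positive eigenvalues contribute at least
`a / (1 - p) · (1 - p) = a`, which outweighs the negative contribution.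
-/

open Matrix

section InnerProduct

variable {ι : Type*}

lemma outer_eq_vecMulVec (w x : ι → ℂ) : outer w x = vecMulVec w (star x) := rfl

variable [Fintype ι]

lemma ip_eq_dotProduct (w v : ι → ℂ) : ip w v = star w ⬝ᵥ v := rfl

lemma ip_sum_right {α : Type*} (u : ι → ℂ) (S : Finset α) (f : α → ι → ℂ) :
    ip u (∑ i ∈ S, f i) = ∑ i ∈ S, ip u (f i) :=
  dotProduct_sum _ _ _

lemma ip_smul_right (u x : ι → ℂ) (z : ℂ) : ip u (z • x) = z * ip u x :=
  dotProduct_smul _ _ _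

lemma ip_comm_star (u w : ι → ℂ) : ip u w = star (ip w u) :=
  star_dotProduct u w

lemma re_ip_self (u : ι → ℂ) : (ip u u).re = ∑ p, Complex.normSq (u p) := by
  simp only [ip, Complex.re_sum]
  refine Finset.sum_congr rfl fun p _ => ?_
  rw [Complex.star_def, ← Complex.normSq_eq_conj_mul_self, Complex.ofReal_re]

lemma re_ip_self_of_nrm_eq_one {u : ι → ℂ} (hu : nrm u = 1) : (ip u u).re = 1 :=
  Real.sqrt_eq_one.mp hu

lemma norm_le_one_of_nrm_eq_one {u : ι → ℂ} (hu : nrm u = 1) (p : ι) : ‖u p‖ ≤ 1 := by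
  have hsq : Complex.normSq (u p) ≤ 1 := by
    rw [← re_ip_self_of_nrm_eq_one hu, re_ip_self]
    exact Finset.single_le_sum (fun q _ => Complex.normSq_nonneg (u q)) (Finset.mem_univ p)
  rw [Complex.normSq_eq_norm_sq] at hsq
  exact (sq_le_one_iff₀ (norm_nonneg _)).mp hsq

lemma outer_mulVec (w x u : ι → ℂ) : outer w x *ᵥ u = ip x u • w := by
  rw [outer_eq_vecMulVec, vecMulVec_mulVec, op_smul_eq_smul, ip_eq_dotProduct]

lemma ip_outer_self_mulVec (w u : ι → ℂ) :
    ip u (outer w w *ᵥ u) = Complex.normSq (ip w u) := by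
  rw [outer_mulVec, ip_smul_right, ip_comm_star u w, Complex.star_def, Complex.mul_conj]

lemma ip_sum_smul_outer_mulVec {α : Type*} (S : Finset α) (t : α → ℝ) (v : α → ι → ℂ)
    (u : ι → ℂ) :
    ip u ((∑ i ∈ S, (t i : ℂ) • outer (v i) (v i)) *ᵥ u)
      = ((∑ i ∈ S, t i * Complex.normSq (ip (v i) u) : ℝ) : ℂ) := by
  rw [sum_mulVec, ip_sum_right]
  push_cast
  refine Finset.sum_congr rfl fun i _ => ?_
  rw [smul_mulVec, ip_smul_right, ip_outer_self_mulVec]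

lemma ip_sum_outer_mulVec {α : Type*} (S : Finset α) (v : α → ι → ℂ) (u : ι → ℂ) :
    ip u ((∑ i ∈ S, outer (v i) (v i)) *ᵥ u)
      = ((∑ i ∈ S, Complex.normSq (ip (v i) u) : ℝ) : ℂ) := by
  simpa using ip_sum_smul_outer_mulVec S (fun _ => 1) v u

end InnerProduct

section OrthonormalBasis

variable {ι : Type*} [Fintype ι] [DecidableEq ι] {v : ι → ι → ℂ}

lemma sum_outer_self_eq_one (horth : ∀ i j, ip (v i) (v j) = if i = j then 1 else 0) :
    ∑ i, outer (v i) (v i) = 1 := by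
  let M : Matrix ι ι ℂ := of fun p j => v j p
  have hMM : Mᴴ * M = 1 := by
    ext i j
    simpa [mul_apply, conjTranspose_apply, M, one_apply, ip] using horth i j
  have hMM' : M * Mᴴ = 1 := mul_eq_one_comm.mp hMM
  ext p q
  simpa [mul_apply, conjTranspose_apply, M, Matrix.sum_apply, outer] using congr_fun₂ hMM' p q

lemma sum_normSq_ip_eq (horth : ∀ i j, ip (v i) (v j) = if i = j then 1 else 0)
    (u : ι → ℂ) : ∑ i, Complex.normSq (ip (v i) u) = (ip u u).re := by
  have h := ip_sum_outer_mulVec Finset.univ v u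
  rw [sum_outer_self_eq_one horth, one_mulVec] at h
  rw [h, Complex.ofReal_re]

lemma eq_sum_smul_outer_of_mulVec_eq
    (horth : ∀ i j, ip (v i) (v j) = if i = j then 1 else 0)
    {X : Matrix ι ι ℂ} {μ : ι → ℝ} (heig : ∀ i, X *ᵥ v i = (μ i : ℂ) • v i) :
    X = ∑ i, (μ i : ℂ) • outer (v i) (v i) := by
  calc X = X * ∑ i, outer (v i) (v i) := by rw [sum_outer_self_eq_one horth, mul_one]
    _ = ∑ i, (μ i : ℂ) • outer (v i) (v i) := by
      refine Finset.mul_sum _ _ _ |>.trans (Finset.sum_congr rfl fun i _ => ?_)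
      rw [outer_eq_vecMulVec, mul_vecMulVec, heig, smul_vecMulVec]

end OrthonormalBasis

lemma bddAbove_opNorm_set {n m : ℕ} (k : ℕ) (Y : Matrix (Fin n × Fin m) (Fin n × Fin m) ℂ) :
    BddAbove {r | ∃ v w, nrm v = 1 ∧ nrm w = 1 ∧ SRle k v ∧ SRle k w ∧
      r = ‖ip w (Y *ᵥ v)‖} := by
  refine ⟨∑ p, ∑ q, ‖Y p q‖, ?_⟩
  rintro r ⟨v, w, hv, hw, -, -, rfl⟩
  refine (norm_sum_le _ _).trans (Finset.sum_le_sum fun p _ => ?_)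
  have hw' : ‖star (w p)‖ ≤ 1 := by
    rw [norm_star]
    exact norm_le_one_of_nrm_eq_one hw p
  have hYv : ‖(Y *ᵥ v) p‖ ≤ ∑ q, ‖Y p q‖ := by
    refine (norm_sum_le _ _).trans (Finset.sum_le_sum fun q _ => ?_)
    rw [norm_mul]
    exact mul_le_of_le_one_right (norm_nonneg _) (norm_le_one_of_nrm_eq_one hv q)
  rw [norm_mul]
  exact (mul_le_of_le_one_left (norm_nonneg _) hw').trans hYv

lemma re_ip_mulVec_le_opNorm {n m k : ℕ} (Y : Matrix (Fin n × Fin m) (Fin n × Fin m) ℂ)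
    {u : Fin n × Fin m → ℂ} (hu : nrm u = 1) (hSR : SRle k u) :
    (ip u (Y *ᵥ u)).re ≤ opNorm k Y :=
  (Complex.re_le_norm _).trans <|
    le_csSup (bddAbove_opNorm_set k Y) ⟨u, u, hu, hu, hSR, hSR, rfl⟩

lemma sum_mul_nonneg_of_spectral_bounds {ι : Type*} [Fintype ι] {μ q : ι → ℝ} {a p : ℝ}
    (hq : ∀ i, 0 ≤ q i) (hq_sum : ∑ i, q i = 1) (hp : p < 1)
    (hP : ∑ i ∈ Finset.univ.filter (fun i => μ i ≤ 0), q i ≤ p)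
    (hN : ∑ i ∈ Finset.univ.filter (fun i => μ i < 0), -μ i * q i ≤ a)
    (hpos : ∀ i, 0 < μ i → a / (1 - p) ≤ μ i) :
    0 ≤ ∑ i, μ i * q i := by
  set c := a / (1 - p)
  have hc : c * (1 - p) = a := div_mul_cancel₀ a (sub_pos.mpr hp).ne'
  have ha : 0 ≤ a := (Finset.sum_nonneg fun i hi => mul_nonneg
    (neg_nonneg.mpr (Finset.mem_filter.mp hi).2.le) (hq i)).trans hN
  have hc0 : 0 ≤ c := div_nonneg ha (sub_pos.mpr hp).le
  rw [Finset.sum_filter] at hP hN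
  -- Summed over `i`, this gives `∑ μ q ≥ c - c p - a = 0`.
  have hpt : ∀ i, c * q i - c * (if μ i ≤ 0 then q i else 0)
      - (if μ i < 0 then -μ i * q i else 0) ≤ μ i * q i := by
    intro i
    rcases lt_trichotomy (μ i) 0 with h | h | h
    · simp [h, h.le]
    · simp [h]
    · simp only [not_le.mpr h, not_lt.mpr h.le, if_false]
      linarith [mul_le_mul_of_nonneg_right (hpos i h) (hq i)]
  have hsum := Finset.sum_le_sum fun i (_ : i ∈ Finset.univ) => hpt i
  rw [Finset.sum_sub_distrib, Finset.sum_sub_distrib, ← Finset.mul_sum, ← Finset.mul_sum,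
    hq_sum] at hsum
  linarith [mul_le_mul_of_nonneg_left hP hc0]

theorem stmt16_general {n m k : ℕ}
    (X : Matrix (Fin n × Fin m) (Fin n × Fin m) ℂ)
    (μ : Fin n × Fin m → ℝ) (v : Fin n × Fin m → Fin n × Fin m → ℂ)
    (horth : ∀ i j, ip (v i) (v j) = if i = j then 1 else 0)
    (heig : ∀ i, X.mulVec (v i) = (μ i : ℂ) • v i)
    -- |X⁻| : the absolute value of the negative part of X
    (Xnegabs : Matrix (Fin n × Fin m) (Fin n × Fin m) ℂ)
    (hXnegabs : Xnegabs =
      ∑ i ∈ Finset.univ.filter (fun i => μ i < 0), ((-μ i : ℝ) : ℂ) • outer (v i) (v i))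
    -- P_X⁰ + P_X⁻ : projection onto the kernel plus negative eigenspace
    (P0neg : Matrix (Fin n × Fin m) (Fin n × Fin m) ℂ)
    (hP0neg : P0neg = ∑ i ∈ Finset.univ.filter (fun i => μ i ≤ 0), outer (v i) (v i))
    (hlt : opNorm k P0neg < 1)
    (hpos : ∀ i, 0 < μ i → opNorm k Xnegabs / (1 - opNorm k P0neg) ≤ μ i) :
    BlockPos k X := by
  intro u hu hSR
  rw [eq_sum_smul_outer_of_mulVec_eq horth heig, ip_sum_smul_outer_mulVec, Complex.ofReal_re]
  refine sum_mul_nonneg_of_spectral_bounds (fun i => Complex.normSq_nonneg _) ?_ hlt ?_ ?_ hpos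
  · rw [sum_normSq_ip_eq horth, re_ip_self_of_nrm_eq_one hu]
  · simpa only [hP0neg, ip_sum_outer_mulVec, Complex.ofReal_re]
      using re_ip_mulVec_le_opNorm P0neg hu hSR
  · simpa only [hXnegabs, ip_sum_smul_outer_mulVec, Complex.ofReal_re]
      using re_ip_mulVec_le_opNorm Xnegabs hu hSR

/-- sufficient spectral condition for k-block positivity
(condition (2) of Theorem 4.1). -/
theorem stmt16 {n m k : ℕ} (hmn : m ≤ n) (hk1 : 1 ≤ k) (hkm : k ≤ m)
    (X : Matrix (Fin n × Fin m) (Fin n × Fin m) ℂ) (hX : X.IsHermitian)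
    (μ : Fin n × Fin m → ℝ) (v : Fin n × Fin m → Fin n × Fin m → ℂ)
    (horth : ∀ i j, ip (v i) (v j) = if i = j then 1 else 0)
    (heig : ∀ i, X.mulVec (v i) = (μ i : ℂ) • v i)
    -- |X⁻| : the absolute value of the negative part of X
    (Xnegabs : Matrix (Fin n × Fin m) (Fin n × Fin m) ℂ)
    (hXnegabs : Xnegabs =
      ∑ i ∈ Finset.univ.filter (fun i => μ i < 0), ((-μ i : ℝ) : ℂ) • outer (v i) (v i))
    -- P_X⁰ + P_X⁻ : projection onto the kernel plus negative eigenspace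
    (P0neg : Matrix (Fin n × Fin m) (Fin n × Fin m) ℂ)
    (hP0neg : P0neg = ∑ i ∈ Finset.univ.filter (fun i => μ i ≤ 0), outer (v i) (v i))
    (hlt : opNorm k P0neg < 1)
    (hpos : ∀ i, 0 < μ i → opNorm k Xnegabs / (1 - opNorm k P0neg) ≤ μ i) :
    BlockPos k X :=
  stmt16_general X μ v horth heig Xnegabs hXnegabs P0neg hP0neg hlt hpos
end
end
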